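/- Let A and Ω_A be real symmetric m×m matrices, B, Ω_B ∈ ℝ^m, λ > 0 and d ∈ (0,1). Suppose A ⪰ λ I_m and ‖Ω_A‖ ≤ d λ (spectral norm). Define x* = −A^{-1}B and x(∞) = −(A+Ω_A)^{-1}(B+Ω_B). Then ‖x(∞) − x*‖² ≤ (2 / ((1−d)² λ²)) · ( ‖x*‖² ‖Ω_A‖_F² + ‖Ω_B‖² ), where ‖·‖_F denotes the Frobenius norm. -/

import Mathlib

open Matrix Finset

/-!
Coercivity `c‖x‖² ≤ xᵀMx` survives the perturbation: `|xᵀΩ_A x| ≤ ‖x‖‖Ω_A x‖ ≤ dλ‖x‖²`, so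
`A + Ω_A` is `(1-d)λ`-coercive. By Cauchy–Schwarz a `c`-coercive matrix satisfies
`c‖x‖ ≤ ‖Mx‖`, hence is invertible. The error `e = x(∞) - x*` solves
`(A + Ω_A)e = -(Ω_A x* + Ω_B)`, so
`(1-d)²λ²‖e‖² ≤ ‖Ω_A x* + Ω_B‖² ≤ 2(‖x*‖²‖Ω_A‖_F² + ‖Ω_B‖²)`.
-/

section Coercive

variable {m n : Type*} [Fintype m] [Fintype n]

lemma sum_sq_add_le (u v : n → ℝ) :
    ∑ k, (u + v) k ^ 2 ≤ 2 * (∑ k, u k ^ 2 + ∑ k, v k ^ 2) :=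
  calc ∑ k, (u + v) k ^ 2 ≤ ∑ k, 2 * (u k ^ 2 + v k ^ 2) := sum_le_sum fun _ _ => add_sq_le
    _ = 2 * (∑ k, u k ^ 2 + ∑ k, v k ^ 2) := by rw [← mul_sum, sum_add_distrib]

lemma sum_sq_mulVec_le_sum_sq_mul_frobenius (M : Matrix m n ℝ) (x : n → ℝ) :
    ∑ p, (M *ᵥ x) p ^ 2 ≤ (∑ k, x k ^ 2) * ∑ p, ∑ q, M p q ^ 2 := by
  rw [mul_sum]
  refine sum_le_sum fun p _ => ?_
  rw [mul_comm]
  exact sum_mul_sq_le_sq_mul_sq _ _ _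

lemma coercive_add_of_sqrt_sum_sq_mulVec_le {M Ω : Matrix n n ℝ} {c δ : ℝ}
    (hM : ∀ x : n → ℝ, c * ∑ k, x k ^ 2 ≤ x ⬝ᵥ M *ᵥ x)
    (hΩ : ∀ x : n → ℝ, √(∑ k, (Ω *ᵥ x) k ^ 2) ≤ δ * √(∑ k, x k ^ 2)) (x : n → ℝ) :
    (c - δ) * ∑ k, x k ^ 2 ≤ x ⬝ᵥ (M + Ω) *ᵥ x := by
  have hcs : -(x ⬝ᵥ Ω *ᵥ x) ≤ δ * ∑ k, x k ^ 2 :=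
    calc -(x ⬝ᵥ Ω *ᵥ x) = ∑ k, x k * (-Ω *ᵥ x) k := by
          simp only [neg_mulVec, Pi.neg_apply, mul_neg, sum_neg_distrib, dotProduct]
      _ ≤ √(∑ k, x k ^ 2) * √(∑ k, (-Ω *ᵥ x) k ^ 2) :=
          Real.sum_mul_le_sqrt_mul_sqrt _ _ _
      _ = √(∑ k, x k ^ 2) * √(∑ k, (Ω *ᵥ x) k ^ 2) := by simp [neg_mulVec]
      _ ≤ √(∑ k, x k ^ 2) * (δ * √(∑ k, x k ^ 2)) := by gcongr; exact hΩ x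
      _ = δ * ∑ k, x k ^ 2 := by rw [mul_left_comm, Real.mul_self_sqrt (by positivity)]
  rw [add_mulVec, dotProduct_add]
  linarith [hM x]

lemma sq_mul_sum_sq_le_sum_sq_mulVec_of_coercive {M : Matrix n n ℝ} {c : ℝ} (hc : 0 ≤ c)
    (hM : ∀ x : n → ℝ, c * ∑ k, x k ^ 2 ≤ x ⬝ᵥ M *ᵥ x) (x : n → ℝ) :
    c ^ 2 * ∑ k, x k ^ 2 ≤ ∑ k, (M *ᵥ x) k ^ 2 := by
  set X := ∑ k, x k ^ 2
  set Y := ∑ k, (M *ᵥ x) k ^ 2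
  have hX : 0 ≤ X := by positivity
  have hcs : c * X ≤ √X * √Y := (hM x).trans (Real.sum_mul_le_sqrt_mul_sqrt _ _ _)
  have hroot : c * √X ≤ √Y := by
    rcases (Real.sqrt_nonneg X).eq_or_lt with h0 | hpos
    · rw [← h0, mul_zero]
      exact Real.sqrt_nonneg Y
    · refine le_of_mul_le_mul_right ?_ hpos
      calc c * √X * √X = c * X := by rw [mul_assoc, Real.mul_self_sqrt hX]
        _ ≤ √X * √Y := hcs
        _ = √Y * √X := mul_comm _ _
  calc c ^ 2 * X = (c * √X) ^ 2 := by rw [mul_pow, Real.sq_sqrt hX]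
    _ ≤ √Y ^ 2 := pow_le_pow_left₀ (by positivity) hroot 2
    _ = Y := Real.sq_sqrt (by positivity)

lemma isUnit_det_of_coercive [DecidableEq n] {M : Matrix n n ℝ} {c : ℝ} (hc : 0 < c)
    (hM : ∀ x : n → ℝ, c * ∑ k, x k ^ 2 ≤ x ⬝ᵥ M *ᵥ x) : IsUnit M.det := by
  rw [isUnit_iff_ne_zero, Ne, ← exists_mulVec_eq_zero_iff.not]
  rintro ⟨v, hv, hMv⟩
  have hle := sq_mul_sum_sq_le_sum_sq_mulVec_of_coercive hc.le hM v
  simp only [hMv, Pi.zero_apply, zero_pow two_ne_zero, sum_const_zero] at hle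
  have hsum : ∑ k, v k ^ 2 = 0 :=
    le_antisymm (nonpos_of_mul_nonpos_right hle (pow_pos hc 2)) (by positivity)
  exact hv (dotProduct_self_eq_zero.mp (by simpa only [dotProduct, sq] using hsum))

lemma mulVec_inv_mulVec_of_coercive [DecidableEq n] {M : Matrix n n ℝ} {c : ℝ} (hc : 0 < c)
    (hM : ∀ x : n → ℝ, c * ∑ k, x k ^ 2 ≤ x ⬝ᵥ M *ᵥ x) (b : n → ℝ) :
    M *ᵥ (M⁻¹ *ᵥ b) = b := by
  rw [mulVec_mulVec, mul_nonsing_inv _ (isUnit_det_of_coercive hc hM), one_mulVec]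

end Coercive

theorem stmt3 (m : ℕ) (A ΩA : Matrix (Fin m) (Fin m) ℝ)
    (B ΩB : Fin m → ℝ)
    (lam d : ℝ) (hlam : 0 < lam) (hd : d ∈ Set.Ioo (0 : ℝ) 1)
    (hApd : ∀ x : Fin m → ℝ, lam * ∑ k, (x k) ^ 2 ≤ x ⬝ᵥ A.mulVec x)
    (hΩAnorm : ∀ x : Fin m → ℝ,
      Real.sqrt (∑ k, (ΩA.mulVec x k) ^ 2) ≤ d * lam * Real.sqrt (∑ k, (x k) ^ 2)) :
    let xstar : Fin m → ℝ := -(A⁻¹.mulVec B)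
    let xinf : Fin m → ℝ := -((A + ΩA)⁻¹.mulVec (B + ΩB))
    ∑ k, (xinf k - xstar k) ^ 2 ≤
      2 / ((1 - d) ^ 2 * lam ^ 2) *
        ((∑ k, (xstar k) ^ 2) * (∑ p, ∑ q, (ΩA p q) ^ 2) + ∑ k, (ΩB k) ^ 2) := by
  intro xstar xinf
  have hc : 0 < (1 - d) * lam := mul_pos (by linarith [hd.2]) hlam
  have hS : ∀ x : Fin m → ℝ, (1 - d) * lam * ∑ k, x k ^ 2 ≤ x ⬝ᵥ (A + ΩA) *ᵥ x := by
    simpa only [sub_mul, one_mul] using coercive_add_of_sqrt_sum_sq_mulVec_le hApd hΩAnorm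
  have hAx : A *ᵥ xstar = -B := by
    rw [mulVec_neg, mulVec_inv_mulVec_of_coercive hlam hApd]
  have hSx : (A + ΩA) *ᵥ xinf = -(B + ΩB) := by
    rw [mulVec_neg, mulVec_inv_mulVec_of_coercive hc hS]
  have herr : (A + ΩA) *ᵥ (xinf - xstar) = -(ΩA *ᵥ xstar + ΩB) := by
    rw [mulVec_sub, hSx, add_mulVec, hAx]
    abel
  have key : ((1 - d) * lam) ^ 2 * ∑ k, (xinf - xstar) k ^ 2 ≤
      2 * ((∑ k, (xstar k) ^ 2) * (∑ p, ∑ q, (ΩA p q) ^ 2) + ∑ k, (ΩB k) ^ 2) :=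
    calc _ ≤ ∑ k, ((A + ΩA) *ᵥ (xinf - xstar)) k ^ 2 :=
          sq_mul_sum_sq_le_sum_sq_mulVec_of_coercive hc.le hS _
      _ = ∑ k, (ΩA *ᵥ xstar + ΩB) k ^ 2 := by simp only [herr, Pi.neg_apply, neg_sq]
      _ ≤ 2 * (∑ k, (ΩA *ᵥ xstar) k ^ 2 + ∑ k, ΩB k ^ 2) := sum_sq_add_le _ _
      _ ≤ _ := by gcongr; exact sum_sq_mulVec_le_sum_sq_mul_frobenius ΩA xstar
  rw [div_mul_eq_mul_div, ← mul_pow, le_div_iff₀ (pow_pos hc 2), mul_comm]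
  simpa only [Pi.sub_apply] using key
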